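/- There exist a constant c₀ > 0 and N ∈ ℕ such that for all n ≥ N the following holds: if w₀, w₁, …, w_n are independent standard Gaussian random variables N(0,1), and f : {−1,1}^n → {−1,1} is the random linear threshold function f(x) = sign(w₀ + Σ_{i=1}^n w_i x_i), then with probability at least 1 − 4/n over the choice of the weights, Inf(f) ≥ c₀·√(n/log n). -/

import Mathlib

open Finset Real MeasureTheory ProbabilityTheory
open scoped Classical

/-- sign: maps z to 1 if z > 0 and to −1 if z ≤ 0. -/
noncomputable def sgn (z : ℝ) : ℝ := if 0 < z then 1 else -1

/-- interpret a Bool as ±1. -/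
def pm (b : Bool) : ℝ := if b then 1 else -1

/-- probability of an event under the uniform distribution on {−1,1}^n. -/
noncomputable def unifPr (n : ℕ) (E : (Fin n → Bool) → Prop) : ℝ :=
  ((Finset.univ : Finset (Fin n → Bool)).filter E).card / 2 ^ n

/-- expectation under the uniform distribution on {−1,1}^n. -/
noncomputable def unifExp (n : ℕ) (g : (Fin n → Bool) → ℝ) : ℝ :=
  (∑ x : Fin n → Bool, g x) / 2 ^ n

/-- flip the i-th coordinate. -/
def flipAt {n : ℕ} (i : Fin n) (x : Fin n → Bool) : Fin n → Bool :=
  Function.update x i (!(x i))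

/-- influence of coordinate i. -/
noncomputable def infl {n : ℕ} (f : (Fin n → Bool) → ℝ) (i : Fin n) : ℝ :=
  unifPr n (fun x => f x ≠ f (flipAt i x))

/-- total influence. -/
noncomputable def totalInfl {n : ℕ} (f : (Fin n → Bool) → ℝ) : ℝ :=
  ∑ i, infl f i

/-- Fourier coefficient f̂(S). -/
noncomputable def fCoeff {n : ℕ} (f : (Fin n → Bool) → ℝ) (S : Finset (Fin n)) : ℝ :=
  unifExp n (fun x => f x * ∏ i ∈ S, pm (x i))

/-- Fourier entropy with log base 2 (0 · log(1/0) is 0 by convention, which holds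
definitionally since `Real.log 0 = 0` in Mathlib). -/
noncomputable def fourierEntropy {n : ℕ} (f : (Fin n → Bool) → ℝ) : ℝ :=
  ∑ S : Finset (Fin n), (fCoeff f S) ^ 2 * Real.logb 2 (1 / (fCoeff f S) ^ 2)

/-- The linear threshold function with weights w₀, w₁, …, w_n. -/
noncomputable def ltf (n : ℕ) (w : Fin (n + 1) → ℝ) : (Fin n → Bool) → ℝ :=
  fun x => sgn (w 0 + ∑ i : Fin n, w i.succ * pm (x i))

/-!
Write `S(x) = w₀ + ∑ wᵢ xᵢ`, so that `f = sgn S` and `E|S| = E[f S] = w₀ E[f] + ∑ wᵢ f̂({i})`.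
Since `|f̂({i})| ≤ Inf_i(f)`, this gives `E|S| ≤ (1 + Inf f) · maxⱼ |wⱼ|`. On the other hand
`E[S²] = ∑ wⱼ²` and `E[S⁴] ≤ 3 E[S²]²`, so Hölder's inequality `E[S²]³ ≤ E|S|² E[S⁴]` gives
`E|S| ≥ √(∑ wⱼ² / 3)`. For standard Gaussian weights, with probability at least `1 - 4/n` both
`maxⱼ |wⱼ| ≤ √(6 log n)` (Gaussian tail and a union bound) and `∑ wⱼ² > n / 2` (Chernoff bound,
using `E[exp(-w²/2)] = 1/√2`), and then `Inf f ≥ √(n / log n) / 6 - 1`.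
-/

open Filter
open scoped NNReal

lemma pm_not (b : Bool) : pm (!b) = -pm b := by cases b <;> simp [pm]

lemma abs_pm (b : Bool) : |pm b| = 1 := by cases b <;> simp [pm]

lemma sgn_mul_self (z : ℝ) : sgn z * z = |z| := by
  unfold sgn
  split_ifs with h
  · rw [one_mul, abs_of_pos h]
  · rw [neg_one_mul, abs_of_nonpos (not_lt.1 h)]

lemma abs_sgn (z : ℝ) : |sgn z| = 1 := by
  unfold sgn
  split_ifs <;> simp

lemma sum_sq_pow_three_le {ι : Type*} (s : Finset ι) (y : ι → ℝ) :
    (∑ i ∈ s, y i ^ 2) ^ 3 ≤ (∑ i ∈ s, |y i|) ^ 2 * ∑ i ∈ s, y i ^ 4 := by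
  have h₁ : (∑ i ∈ s, y i ^ 2) ^ 2 ≤ (∑ i ∈ s, |y i|) * ∑ i ∈ s, |y i| ^ 3 :=
    sum_sq_le_sum_mul_sum_of_sq_le_mul s (fun i _ => abs_nonneg _) (fun i _ => by positivity)
      fun i _ => le_of_eq (by rw [← sq_abs (y i)]; ring)
  have h₂ : (∑ i ∈ s, |y i| ^ 3) ^ 2 ≤ (∑ i ∈ s, y i ^ 2) * ∑ i ∈ s, y i ^ 4 :=
    sum_sq_le_sum_mul_sum_of_sq_le_mul s (fun i _ => by positivity) (fun i _ => by positivity)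
      fun i _ => le_of_eq (by rw [show y i ^ 4 = (y i ^ 2) ^ 2 by ring, ← sq_abs (y i)]; ring)
  rcases (sum_nonneg fun i (_ : i ∈ s) => sq_nonneg (y i)).eq_or_lt with h0 | hpos
  · rw [← h0, zero_pow three_ne_zero]
    positivity
  · refine le_of_mul_le_mul_left ?_ hpos
    calc (∑ i ∈ s, y i ^ 2) * (∑ i ∈ s, y i ^ 2) ^ 3 = ((∑ i ∈ s, y i ^ 2) ^ 2) ^ 2 := by ring
      _ ≤ ((∑ i ∈ s, |y i|) * ∑ i ∈ s, |y i| ^ 3) ^ 2 := by gcongr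
      _ = (∑ i ∈ s, |y i|) ^ 2 * (∑ i ∈ s, |y i| ^ 3) ^ 2 := by ring
      _ ≤ (∑ i ∈ s, |y i|) ^ 2 * ((∑ i ∈ s, y i ^ 2) * ∑ i ∈ s, y i ^ 4) := by gcongr
      _ = _ := by ring

section BooleanCube

variable {n : ℕ}

lemma sum_cube_const (a : ℝ) : ∑ _x : Fin n → Bool, a = 2 ^ n * a := by simp

lemma flipAt_apply_self (i : Fin n) (x : Fin n → Bool) : flipAt i x i = !x i := by
  simp [flipAt]

lemma flipAt_apply_of_ne {i j : Fin n} (h : j ≠ i) (x : Fin n → Bool) : flipAt i x j = x j :=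
  Function.update_of_ne h _ _

lemma flipAt_involutive (i : Fin n) : Function.Involutive (flipAt i) := by
  intro x
  funext j
  by_cases h : j = i
  · subst h
    simp [flipAt_apply_self]
  · simp [flipAt_apply_of_ne h]

lemma sum_comp_flipAt (i : Fin n) (g : (Fin n → Bool) → ℝ) :
    ∑ x, g (flipAt i x) = ∑ x, g x :=
  (flipAt_involutive i).bijective.sum_comp g

lemma two_mul_sum_add_mul_pm (i : Fin n) {q : (Fin n → Bool) → ℝ}
    (hq : ∀ x, q (flipAt i x) = q x) (c : ℝ) (g : ℝ → ℝ) :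
    2 * ∑ x, g (q x + c * pm (x i)) = ∑ x, (g (q x + c) + g (q x - c)) := by
  have h_flip : ∑ x, g (q x + c * pm (x i)) = ∑ x, g (q x - c * pm (x i)) := by
    rw [← sum_comp_flipAt i]
    simp only [hq, flipAt_apply_self, pm_not, mul_neg, sub_eq_add_neg]
  rw [two_mul]
  nth_rw 2 [h_flip]
  rw [← sum_add_distrib]
  refine sum_congr rfl fun x _ => ?_
  cases x i <;> simp [pm, sub_eq_add_neg, add_comm]

lemma two_mul_sum_affine_insert (c : ℝ) (v : Fin n → ℝ) {A : Finset (Fin n)} {a : Fin n}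
    (ha : a ∉ A) (g : ℝ → ℝ) :
    2 * ∑ x : Fin n → Bool, g (c + ∑ i ∈ insert a A, v i * pm (x i))
      = ∑ x : Fin n → Bool, (g (c + ∑ i ∈ A, v i * pm (x i) + v a)
          + g (c + ∑ i ∈ A, v i * pm (x i) - v a)) := by
  have h_insert : ∀ x : Fin n → Bool, c + ∑ i ∈ insert a A, v i * pm (x i)
      = c + ∑ i ∈ A, v i * pm (x i) + v a * pm (x a) := fun x => by
    rw [sum_insert ha]
    ring
  simp only [h_insert]
  refine two_mul_sum_add_mul_pm a (fun x => ?_) (v a) g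
  congr 1
  refine sum_congr rfl fun i hi => ?_
  rw [flipAt_apply_of_ne (ne_of_mem_of_not_mem hi ha)]

lemma sum_affine_sq (c : ℝ) (v : Fin n → ℝ) (A : Finset (Fin n)) :
    ∑ x : Fin n → Bool, (c + ∑ i ∈ A, v i * pm (x i)) ^ 2
      = (c ^ 2 + ∑ i ∈ A, v i ^ 2) * 2 ^ n := by
  induction A using Finset.induction_on with
  | empty => simp [mul_comm]
  | insert a A ha ih =>
    have h := two_mul_sum_affine_insert c v ha (· ^ 2)
    have h_pt : ∀ q : ℝ, (q + v a) ^ 2 + (q - v a) ^ 2 = 2 * q ^ 2 + 2 * v a ^ 2 :=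
      fun q => by ring
    simp only [h_pt, sum_add_distrib, ← mul_sum, sum_cube_const, ih] at h
    rw [sum_insert ha]
    linarith

lemma sum_affine_pow_four_le (c : ℝ) (v : Fin n → ℝ) (A : Finset (Fin n)) :
    ∑ x : Fin n → Bool, (c + ∑ i ∈ A, v i * pm (x i)) ^ 4
      ≤ 3 * (c ^ 2 + ∑ i ∈ A, v i ^ 2) ^ 2 * 2 ^ n := by
  have h2n : (0 : ℝ) < 2 ^ n := by positivity
  induction A using Finset.induction_on with
  | empty =>
    simp only [sum_empty, add_zero, sum_cube_const]
    nlinarith [mul_nonneg h2n.le (pow_nonneg (sq_nonneg c) 2)]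
  | insert a A ha ih =>
    have h := two_mul_sum_affine_insert c v ha (· ^ 4)
    have h_pt : ∀ q : ℝ, (q + v a) ^ 4 + (q - v a) ^ 4
        = 2 * q ^ 4 + 12 * v a ^ 2 * q ^ 2 + 2 * v a ^ 4 := fun q => by ring
    simp only [h_pt, sum_add_distrib, ← mul_sum, sum_cube_const, sum_affine_sq] at h
    rw [sum_insert ha]
    nlinarith [mul_nonneg (sq_nonneg (v a)) h2n.le,
      mul_nonneg (sum_nonneg fun i (_ : i ∈ A) => sq_nonneg (v i)) (sq_nonneg c)]

lemma sqrt_div_three_mul_two_pow_le_sum_abs_affine (c : ℝ) (v : Fin n → ℝ) :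
    √((c ^ 2 + ∑ i, v i ^ 2) / 3) * 2 ^ n ≤ ∑ x : Fin n → Bool, |c + ∑ i, v i * pm (x i)| := by
  set B := c ^ 2 + ∑ i, v i ^ 2
  set A := ∑ x : Fin n → Bool, |c + ∑ i, v i * pm (x i)|
  have h2n : (0 : ℝ) < 2 ^ n := by positivity
  have h_holder : (B * 2 ^ n) ^ 3 ≤ A ^ 2 * (3 * B ^ 2 * 2 ^ n) := by
    have h := sum_sq_pow_three_le univ fun x : Fin n → Bool => c + ∑ i, v i * pm (x i)
    rw [sum_affine_sq] at h
    exact h.trans (mul_le_mul_of_nonneg_left (sum_affine_pow_four_le c v univ) (sq_nonneg A))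
  have h_sq : B / 3 * (2 ^ n) ^ 2 ≤ A ^ 2 := by
    rcases (show 0 ≤ B by positivity).eq_or_lt with h0 | hpos
    · rw [← h0]
      simp [sq_nonneg]
    · have : 0 < B ^ 2 * 2 ^ n := by positivity
      nlinarith
  calc √(B / 3) * 2 ^ n = √(B / 3 * (2 ^ n) ^ 2) := by
        rw [sqrt_mul (by positivity), sqrt_sq h2n.le]
    _ ≤ √(A ^ 2) := sqrt_le_sqrt h_sq
    _ = A := sqrt_sq (by positivity)

lemma infl_mul_two_pow (f : (Fin n → Bool) → ℝ) (i : Fin n) :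
    infl f i * 2 ^ n = #{x | f x ≠ f (flipAt i x)} := by
  rw [infl, unifPr, div_mul_cancel₀ _ (by positivity)]
  convert rfl

lemma abs_sum_mul_pm_le_infl {f : (Fin n → Bool) → ℝ} (hf : ∀ x, |f x| ≤ 1) (i : Fin n) :
    |∑ x, f x * pm (x i)| ≤ infl f i * 2 ^ n := by
  have h_flip : ∑ x, f (flipAt i x) * pm (x i) = -∑ x, f x * pm (x i) := by
    rw [← sum_comp_flipAt i, ← sum_neg_distrib]
    simp only [flipAt_involutive i _, flipAt_apply_self, pm_not, mul_neg]
  have h_jump : ∀ x, |(f x - f (flipAt i x)) * pm (x i)|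
      ≤ 2 * if f x ≠ f (flipAt i x) then 1 else 0 := by
    intro x
    rw [abs_mul, abs_pm, mul_one]
    split_ifs with h
    · linarith [abs_sub (f x) (f (flipAt i x)), hf x, hf (flipAt i x)]
    · simp [not_not.1 h]
  calc |∑ x, f x * pm (x i)| = |∑ x, (f x - f (flipAt i x)) * pm (x i)| / 2 := by
        simp only [sub_mul, sum_sub_distrib, h_flip, sub_neg_eq_add, ← two_mul, abs_mul, abs_two]
        ring
    _ ≤ (∑ x, 2 * if f x ≠ f (flipAt i x) then (1 : ℝ) else 0) / 2 := by
        gcongr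
        exact (abs_sum_le_sum_abs _ _).trans (sum_le_sum fun x _ => h_jump x)
    _ = infl f i * 2 ^ n := by
        rw [← mul_sum, sum_boole, infl_mul_two_pow]
        ring

lemma sum_abs_affine_le (c : ℝ) (v : Fin n → ℝ) {t : ℝ} (hv : ∀ i, |v i| ≤ t) :
    ∑ x : Fin n → Bool, |c + ∑ i, v i * pm (x i)|
      ≤ (|c| + t * totalInfl fun x => sgn (c + ∑ i, v i * pm (x i))) * 2 ^ n := by
  set f : (Fin n → Bool) → ℝ := fun x => sgn (c + ∑ i, v i * pm (x i))
  have hf : ∀ x, |f x| ≤ 1 := fun x => (abs_sgn _).le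
  have h_expand : ∑ x : Fin n → Bool, |c + ∑ i, v i * pm (x i)|
      = c * ∑ x, f x + ∑ i, v i * ∑ x, f x * pm (x i) := by
    simp only [← sgn_mul_self, mul_add, mul_sum, sum_add_distrib]
    rw [sum_comm]
    congr 1 <;> refine sum_congr rfl fun _ _ => ?_
    · ring
    · exact sum_congr rfl fun _ _ => by ring
  have h_const : c * ∑ x, f x ≤ |c| * 2 ^ n :=
    calc c * ∑ x, f x ≤ |c| * |∑ x, f x| := (le_abs_self _).trans (abs_mul _ _).le
      _ ≤ |c| * ∑ _x : Fin n → Bool, 1 := by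
          gcongr
          exact (abs_sum_le_sum_abs _ _).trans (sum_le_sum fun x _ => hf x)
      _ = |c| * 2 ^ n := by rw [sum_cube_const, mul_one]
  have h_linear : ∀ i, v i * ∑ x, f x * pm (x i) ≤ t * (infl f i * 2 ^ n) := fun i =>
    calc v i * ∑ x, f x * pm (x i) ≤ |v i| * |∑ x, f x * pm (x i)| :=
          (le_abs_self _).trans (abs_mul _ _).le
      _ ≤ t * (infl f i * 2 ^ n) :=
          mul_le_mul (hv i) (abs_sum_mul_pm_le_infl hf i) (abs_nonneg _)
            ((abs_nonneg _).trans (hv i))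
  calc _ = c * ∑ x, f x + ∑ i, v i * ∑ x, f x * pm (x i) := h_expand
    _ ≤ |c| * 2 ^ n + ∑ i, t * (infl f i * 2 ^ n) :=
        add_le_add h_const (sum_le_sum fun i _ => h_linear i)
    _ = _ := by
        rw [totalInfl, add_mul, mul_sum, sum_mul]
        simp only [mul_assoc]

lemma sqrt_sum_sq_div_three_le_totalInfl_ltf (w : Fin (n + 1) → ℝ) {t : ℝ}
    (hw : ∀ j, |w j| ≤ t) :
    √((∑ j, w j ^ 2) / 3) ≤ t * (1 + totalInfl (ltf n w)) := by
  have h := (sqrt_div_three_mul_two_pow_le_sum_abs_affine (w 0) (fun i => w i.succ)).trans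
    (sum_abs_affine_le (w 0) (fun i => w i.succ) fun i => hw i.succ)
  rw [← Fin.sum_univ_succ (f := fun j => w j ^ 2)] at h
  have := le_of_mul_le_mul_right h (by positivity)
  have := hw 0
  unfold ltf
  linarith

end BooleanCube

section Gaussian

lemma hasSubgaussianMGF_id_gaussianReal (v : ℝ≥0) :
    HasSubgaussianMGF id v (gaussianReal 0 v) where
  integrable_exp_mul := integrable_exp_mul_gaussianReal
  mgf_le t := by simp [mgf_id_gaussianReal]

lemma ProbabilityTheory.HasSubgaussianMGF.measureReal_abs_ge_le {Ω : Type*}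
    {m : MeasurableSpace Ω} {μ : Measure Ω} [IsFiniteMeasure μ] {X : Ω → ℝ} {c : ℝ≥0}
    (h : HasSubgaussianMGF X c μ) {ε : ℝ} (hε : 0 ≤ ε) :
    μ.real {ω | ε ≤ |X ω|} ≤ 2 * exp (-ε ^ 2 / (2 * c)) := by
  calc μ.real {ω | ε ≤ |X ω|} ≤ μ.real ({ω | ε ≤ X ω} ∪ {ω | ε ≤ (-X) ω}) := by
        refine measureReal_mono fun ω hω => ?_
        rcases le_abs'.1 (show ε ≤ |X ω| from hω) with hω | hω
        · exact Or.inr (le_neg_of_le_neg hω)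
        · exact Or.inl hω
    _ ≤ 2 * exp (-ε ^ 2 / (2 * c)) := by
        linarith [measureReal_union_le (μ := μ) {ω | ε ≤ X ω} {ω | ε ≤ (-X) ω},
          h.measure_ge_le hε, h.neg.measure_ge_le hε]

lemma mgf_sq_gaussianReal {t : ℝ} (ht : t < 1 / 2) :
    mgf (fun x => x ^ 2) (gaussianReal 0 1) t = (√(1 - 2 * t))⁻¹ := by
  have h_density : ∀ x, gaussianPDFReal 0 1 x • exp (t * x ^ 2)
      = (√(2 * π))⁻¹ * exp (-(1 / 2 - t) * x ^ 2) := by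
    intro x
    rw [gaussianPDFReal, smul_eq_mul, mul_assoc, ← exp_add]
    congr 2
    · simp
    · simp only [NNReal.coe_one]
      ring
  rw [mgf, integral_gaussianReal_eq_integral_smul one_ne_zero]
  simp_rw [h_density]
  rw [integral_const_mul, integral_gaussian, ← sqrt_inv, ← sqrt_mul (by positivity), ← sqrt_inv]
  congr 1
  have : 1 - 2 * t ≠ 0 := by linarith
  have : 1 / 2 - t ≠ 0 := by linarith
  field_simp

variable {ι : Type*} [Fintype ι]

lemma hasSubgaussianMGF_eval_pi_gaussianReal (v : ℝ≥0) (i : ι) :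
    HasSubgaussianMGF (fun w : ι → ℝ => w i) v (Measure.pi fun _ => gaussianReal 0 v) := by
  refine HasSubgaussianMGF.of_map (Y := fun w : ι → ℝ => w i) (X := id)
    (measurable_pi_apply i).aemeasurable ?_
  rw [(measurePreserving_eval _ i).map_eq]
  exact hasSubgaussianMGF_id_gaussianReal v

lemma measureReal_pi_gaussianReal_exists_lt_abs_le {t : ℝ} (ht : 0 ≤ t) :
    (Measure.pi fun _ : ι => gaussianReal 0 1).real {w | ∃ i, t < |w i|}
      ≤ Fintype.card ι * (2 * exp (-t ^ 2 / 2)) := by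
  calc _ ≤ (Measure.pi fun _ : ι => gaussianReal 0 1).real (⋃ i, {w | t ≤ |w i|}) :=
        measureReal_mono fun w hw => by
          obtain ⟨i, hi⟩ := hw
          exact Set.mem_iUnion.2 ⟨i, le_of_lt hi⟩
    _ ≤ ∑ i, (Measure.pi fun _ : ι => gaussianReal 0 1).real {w | t ≤ |w i|} :=
        measureReal_iUnion_fintype_le _
    _ ≤ ∑ _i : ι, 2 * exp (-t ^ 2 / 2) := by
        gcongr with i
        simpa using (hasSubgaussianMGF_eval_pi_gaussianReal 1 i).measureReal_abs_ge_le ht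
    _ = _ := by simp

lemma measureReal_pi_gaussianReal_sum_sq_le (s : Finset ι) (ε : ℝ) :
    (Measure.pi fun _ : ι => gaussianReal 0 1).real {w | ∑ i ∈ s, w i ^ 2 ≤ ε}
      ≤ exp (ε / 2) * (√2)⁻¹ ^ #s := by
  set μ := Measure.pi fun _ : ι => gaussianReal 0 1
  have h_indep : iIndepFun (fun i (w : ι → ℝ) => w i ^ 2) μ :=
    iIndepFun_pi (X := fun _ x => x ^ 2) fun _ => by fun_prop
  have h_mgf : ∀ i, mgf (fun w : ι → ℝ => w i ^ 2) μ (-1 / 2) = (√2)⁻¹ := by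
    intro i
    rw [← Function.comp_def (fun x : ℝ => x ^ 2),
      ← mgf_map (measurable_pi_apply (X := fun _ : ι => ℝ) i).aemeasurable
        (by fun_prop : Measurable fun x : ℝ => exp (-1 / 2 * x ^ 2)).aestronglyMeasurable,
      (measurePreserving_eval _ i).map_eq, mgf_sq_gaussianReal (by norm_num)]
    norm_num
  have h_int : Integrable (fun w => exp (-1 / 2 * ∑ i ∈ s, w i ^ 2)) μ := by
    refine (integrable_const 1).mono' (by fun_prop : Measurable fun w : ι → ℝ =>
      exp (-1 / 2 * ∑ i ∈ s, w i ^ 2)).aestronglyMeasurable (ae_of_all _ fun w => ?_)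
    rw [norm_of_nonneg (exp_nonneg _), exp_le_one_iff]
    nlinarith [sum_nonneg fun i (_ : i ∈ s) => sq_nonneg (w i)]
  calc μ.real {w | ∑ i ∈ s, w i ^ 2 ≤ ε}
      ≤ exp (-(-1 / 2) * ε) * mgf (∑ i ∈ s, fun w : ι → ℝ => w i ^ 2) μ (-1 / 2) := by
        simpa only [Finset.sum_apply] using
          measure_le_le_exp_mul_mgf (X := ∑ i ∈ s, fun w : ι → ℝ => w i ^ 2) ε (by norm_num)
            (by simpa only [Finset.sum_apply] using h_int)
    _ = exp (ε / 2) * (√2)⁻¹ ^ #s := by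
        rw [h_indep.mgf_sum (fun i => by fun_prop), prod_congr rfl fun i _ => h_mgf i,
          prod_const]
        ring_nf

lemma one_sub_tails_le_measureReal_pi_gaussianReal {t : ℝ} (ht : 0 ≤ t) (ε : ℝ) :
    1 - Fintype.card ι * (2 * exp (-t ^ 2 / 2)) - exp (ε / 2) * (√2)⁻¹ ^ Fintype.card ι
      ≤ (Measure.pi fun _ : ι => gaussianReal 0 1).real
          {w | (∀ i, |w i| ≤ t) ∧ ε < ∑ i, w i ^ 2} := by
  set μ := Measure.pi fun _ : ι => gaussianReal 0 1
  set G := {w : ι → ℝ | (∀ i, |w i| ≤ t) ∧ ε < ∑ i, w i ^ 2}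
  have h_compl : Gᶜ ⊆ {w | ∃ i, t < |w i|} ∪ {w | ∑ i, w i ^ 2 ≤ ε} := fun w hw => by
    simp only [G, Set.mem_compl_iff, Set.mem_ofPred_eq, not_and_or, not_forall, not_le,
      not_lt] at hw
    exact hw
  have h_univ : 1 ≤ μ.real G + μ.real Gᶜ := by
    simpa [Set.union_compl_self] using measureReal_union_le (μ := μ) G Gᶜ
  have h_tails := (measureReal_mono h_compl).trans (measureReal_union_le (μ := μ) _ _)
  have h_sum_sq := measureReal_pi_gaussianReal_sum_sq_le (ι := ι) univ ε
  rw [card_univ] at h_sum_sq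
  linarith [measureReal_pi_gaussianReal_exists_lt_abs_le (ι := ι) ht]

end Gaussian

lemma eventually_const_mul_log_le {C : ℝ} (hC : 0 < C) : ∀ᶠ x : ℝ in atTop, C * log x ≤ x := by
  filter_upwards [isLittleO_log_id_atTop.bound (inv_pos.2 hC), eventually_ge_atTop 0]
    with x hx hx0
  rw [norm_eq_abs, norm_eq_abs, id, abs_of_nonneg hx0] at hx
  calc C * log x ≤ C * |log x| := by gcongr; exact le_abs_self _
    _ ≤ C * (C⁻¹ * x) := by gcongr
    _ = x := by field_simp

lemma eventually_exp_div_four_mul_inv_sqrt_two_pow_le :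
    ∀ᶠ n : ℕ in atTop, exp (n / 4) * (√2)⁻¹ ^ n ≤ 1 / n := by
  set q := exp (1 / 4) * (√2)⁻¹
  have hq0 : 0 ≤ q := by positivity
  have hq1 : q < 1 := by
    have h4 : q ^ 4 = exp 1 / 4 := by
      rw [mul_pow, inv_pow, ← exp_nat_mul, show (√2) ^ 4 = (√2 ^ 2) ^ 2 by ring,
        sq_sqrt zero_le_two]
      norm_num [div_eq_mul_inv]
    refine (pow_lt_one_iff_of_nonneg hq0 four_ne_zero).1 ?_
    rw [h4]
    linarith [exp_one_lt_d9]
  filter_upwards [(tendsto_self_mul_const_pow_of_lt_one hq0 hq1).eventually (ge_mem_nhds one_pos),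
    eventually_gt_atTop 0] with n hn hn0
  have hq : exp (n / 4) * (√2)⁻¹ ^ n = q ^ n := by
    rw [mul_pow, ← exp_nat_mul]
    ring_nf
  rw [hq, le_div_iff₀ (by exact_mod_cast hn0), mul_comm]
  exact hn

lemma gaussian_tails_le_four_div {n : ℕ} (hn : 1 < n)
    (hexp : exp (n / 4) * (√2)⁻¹ ^ n ≤ 1 / n) :
    (n + 1) * (2 * exp (-√(6 * log n) ^ 2 / 2)) + exp (n / 2 / 2) * (√2)⁻¹ ^ (n + 1)
      ≤ 4 / n := by
  have hn2 : (2 : ℝ) ≤ n := by exact_mod_cast hn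
  have h_tail : exp (-√(6 * log n) ^ 2 / 2) = 1 / n ^ 3 := by
    rw [sq_sqrt (by positivity [log_nonneg (by linarith : (1 : ℝ) ≤ n)]),
      show -(6 * log n) / 2 = -(3 * log n) by ring, exp_neg,
      show 3 * log n = log (n ^ 3) by rw [log_pow]; norm_num, exp_log (by positivity), one_div]
  have h_pow : (√2)⁻¹ ^ (n + 1) ≤ (√2)⁻¹ ^ n :=
    pow_le_pow_of_le_one (by positivity) (inv_le_one_of_one_le₀ (one_le_sqrt.2 one_le_two))
      n.le_succ
  have h_cubic : (n + 1) * (2 * (1 / (n : ℝ) ^ 3)) ≤ 3 / n := by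
    rw [show (n + 1 : ℝ) * (2 * (1 / n ^ 3)) = 2 * (n + 1) / n ^ 3 by ring,
      div_le_div_iff₀ (by positivity) (by positivity)]
    nlinarith [mul_le_mul hn2 hn2 zero_le_two (by positivity)]
  calc _ ≤ 3 / n + exp (n / 4) * (√2)⁻¹ ^ n := by
        rw [h_tail, show (n : ℝ) / 2 / 2 = n / 4 by ring]
        gcongr
    _ ≤ 4 / n := by linarith [show (3 : ℝ) / n + 1 / n = 4 / n by ring]

lemma sqrt_div_log_div_twelve_le_totalInfl_ltf {n : ℕ} (hn : 1 < n) (hlog : 144 * log n ≤ n)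
    (w : Fin (n + 1) → ℝ) (hw : ∀ j, |w j| ≤ √(6 * log n)) (hσ : (n : ℝ) / 2 < ∑ j, w j ^ 2) :
    1 / 12 * √(n / log n) ≤ totalInfl (ltf n w) := by
  have hL : 0 < log n := log_pos (by exact_mod_cast hn)
  set Q := √(n / log n)
  have hQ : 12 ≤ Q := le_sqrt_of_sq_le (by rw [le_div_iff₀ hL]; linarith)
  have h_scale : √(6 * log n) * (Q / 6) = √(n / 6) := by
    have h36 : Q / 6 = √(n / log n / 36) := by
      rw [sqrt_div' _ (by norm_num), show (36 : ℝ) = 6 ^ 2 by norm_num, sqrt_sq (by norm_num)]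
    rw [h36, ← sqrt_mul (by positivity)]
    congr 1
    field_simp
    ring
  have h := (sqrt_le_sqrt (by linarith : (n : ℝ) / 6 ≤ (∑ j, w j ^ 2) / 3)).trans
    (sqrt_sum_sq_div_three_le_totalInfl_ltf w hw)
  rw [← h_scale] at h
  have := le_of_mul_le_mul_left h (by positivity)
  linarith

/-- a random LTF with i.i.d. standard Gaussian weights has influence
Ω(√(n / log n)) with probability at least 1 − 4/n. -/
theorem random_gaussian_ltf_influence_weak :
    ∃ c₀ : ℝ, 0 < c₀ ∧ ∃ N : ℕ, ∀ n : ℕ, N ≤ n →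
      (Measure.pi fun _ : Fin (n + 1) => gaussianReal 0 1)
          {w : Fin (n + 1) → ℝ | c₀ * Real.sqrt ((n : ℝ) / Real.log n) ≤ totalInfl (ltf n w)} ≥
        ENNReal.ofReal (1 - 4 / (n : ℝ)) := by
  obtain ⟨N, hN⟩ := eventually_atTop.1 <| (eventually_gt_atTop 1).and <|
    (tendsto_natCast_atTop_atTop.eventually (eventually_const_mul_log_le (C := 144)
      (by norm_num))).and eventually_exp_div_four_mul_inv_sqrt_two_pow_le
  refine ⟨1 / 12, by norm_num, N, fun n hn => ?_⟩
  obtain ⟨hn1, hlog, hexp⟩ := hN n hn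
  have h_good := one_sub_tails_le_measureReal_pi_gaussianReal (ι := Fin (n + 1))
    (sqrt_nonneg (6 * log n)) ((n : ℝ) / 2)
  rw [Fintype.card_fin, Nat.cast_add_one] at h_good
  rw [ge_iff_le, ← ofReal_measureReal (measure_ne_top _ _)]
  refine ENNReal.ofReal_le_ofReal <| (le_trans ?_ h_good).trans <| measureReal_mono
    fun w hw => sqrt_div_log_div_twelve_le_totalInfl_ltf hn1 hlog w hw.1 hw.2
  linarith [gaussian_tails_le_four_div hn1 hexp]
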